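/- arXiv:2105.08451 — 2 statements merged into one kernel-verified Lean document; each statement's English description precedes it below -/
import Mathlib

section
/- Suppose K : ℝ^p → ℝ is twice continuously differentiable with ‖DK(x)‖ ≤ c₁ and ‖D²K(x)‖ ≤ c₂ for all x ∈ ℝ^p, and that for almost every ω the map s ↦ M(ω, s) is twice continuously differentiable with ‖DM(ω, s)‖ ≤ c₃ and ‖D²M(ω, s)‖ ≤ c₄ for all s, where c₁, c₂, c₃, c₄ are deterministic constants. Then f is L_r-differentiable in s: for almost every ω the path s ↦ f(ω, s) is differentiable, and for every s₀ ∈ ℝ^p the Taylor remainder satisfies E[|f(s₀ + u) − f(s₀) − D_s f(·, s₀)(u)|^r] / ‖u‖^r → 0 as u → 0 in ℝ^p \ {0}, where D_s f(ω, s₀) denotes the pathwise Fréchet derivative of f(ω, ·) at s₀. -/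
/-!
Pathwise, each summand `s ↦ K (M ω s - μⱼ) βⱼ` has, by the chain rule, a derivative that is
Lipschitz with constant `L |βⱼ|`, where `L = c₂ c₃² + c₁ c₄`. Hence the Taylor remainder of
`f ω` at `s₀` is at most `L ‖u‖² S ω` with `S = ∑_{j < N} |βⱼ|`, and
`E |remainder|^r / ‖u‖^r ≤ L^r E[S^r] ‖u‖^r → 0` once `E[S^r] < ∞`. By Jensen,
`S^r ≤ N^(r-1) ∑_{j < N} |βⱼ|^r`; integrating first over the sequence, which is independent of
`N`, and using that the `βⱼ` are identically distributed gives `E[S^r] ≤ E[N^r] E|β₀|^r`, and a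
Poisson variable has moments of all orders.
-/

open MeasureTheory ProbabilityTheory Filter

/-- The Lévy-dynamic field at a fixed time:
`f (ω, s) = ∑_{j < N ω} K (M (ω, s) - μ j ω) * β j ω`. -/
noncomputable def levyField {Ω : Type*} {p : ℕ} (N : Ω → ℕ) (μ : ℕ → Ω → (Fin p → ℝ))
    (β : ℕ → Ω → ℝ) (M : Ω → (Fin p → ℝ) → (Fin p → ℝ)) (K : (Fin p → ℝ) → ℝ)
    (ω : Ω) (s : Fin p → ℝ) : ℝ :=
  ∑ j ∈ Finset.range (N ω), K (M ω s - μ j ω) * β j ω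

open Topology
open scoped ENNReal NNReal

section Calculus

variable {E F G : Type*} [NormedAddCommGroup E] [NormedSpace ℝ E]
  [NormedAddCommGroup F] [NormedSpace ℝ F] [NormedAddCommGroup G] [NormedSpace ℝ G]

theorem norm_fderiv_sub_fderiv_le_of_norm_iteratedFDeriv_two_le {f : E → F} {C : ℝ}
    (hf : ContDiff ℝ 2 f) (hC : ∀ x, ‖iteratedFDeriv ℝ 2 f x‖ ≤ C) (x y : E) :
    ‖fderiv ℝ f x - fderiv ℝ f y‖ ≤ C * ‖x - y‖ := by
  have hd : Differentiable ℝ (fderiv ℝ f) :=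
    (hf.fderiv_right (m := 1) le_rfl).differentiable one_ne_zero
  have hC' : ∀ z, ‖fderiv ℝ (fderiv ℝ f) z‖ ≤ C := fun z => by
    have h := hC z
    rwa [← norm_iteratedFDeriv_fderiv (n := 1), ← norm_iteratedFDeriv_fderiv (n := 0),
      norm_iteratedFDeriv_zero] at h
  exact convex_univ.norm_image_sub_le_of_norm_fderiv_le (fun z _ => hd z) (fun z _ => hC' z)
    (Set.mem_univ y) (Set.mem_univ x)

theorem norm_sub_sub_fderiv_le_of_norm_fderiv_sub_le {f : E → F} {C : ℝ}
    (hf : Differentiable ℝ f) (hC : ∀ x y, ‖fderiv ℝ f x - fderiv ℝ f y‖ ≤ C * ‖x - y‖)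
    (x u : E) : ‖f (x + u) - f x - fderiv ℝ f x u‖ ≤ C * ‖u‖ ^ 2 := by
  rcases eq_or_ne u 0 with rfl | hu
  · simp
  have hC0 : 0 ≤ C := by
    have := (norm_nonneg _).trans (hC (x + u) x)
    rw [add_sub_cancel_left] at this
    exact nonneg_of_mul_nonneg_left this (norm_pos_iff.2 hu)
  have key := (convex_closedBall x ‖u‖).norm_image_sub_le_of_norm_fderiv_le'
    (fun z _ => hf z) (fun z hz => (hC z x).trans
      (mul_le_mul_of_nonneg_left (by simpa [dist_eq_norm] using hz) hC0))
    (Metric.mem_closedBall_self (norm_nonneg u)) (by simp : x + u ∈ Metric.closedBall x ‖u‖)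
  simpa [sq, mul_assoc] using key

theorem norm_fderiv_comp_sub_le {g : F → G} {f : E → F} {c₁ c₂ c₃ c₄ : ℝ} (hc₂ : 0 ≤ c₂)
    (hg : Differentiable ℝ g) (hg₁ : ∀ y, ‖fderiv ℝ g y‖ ≤ c₁)
    (hg₂ : ∀ y y', ‖fderiv ℝ g y - fderiv ℝ g y'‖ ≤ c₂ * ‖y - y'‖)
    (hf : Differentiable ℝ f) (hf₁ : ∀ x, ‖fderiv ℝ f x‖ ≤ c₃)
    (hf₂ : ∀ x x', ‖fderiv ℝ f x - fderiv ℝ f x'‖ ≤ c₄ * ‖x - x'‖) (x x' : E) :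
    ‖fderiv ℝ (g ∘ f) x - fderiv ℝ (g ∘ f) x'‖ ≤ (c₂ * c₃ ^ 2 + c₁ * c₄) * ‖x - x'‖ := by
  have hc₁ : 0 ≤ c₁ := (norm_nonneg _).trans (hg₁ 0)
  have hc₃ : 0 ≤ c₃ := (norm_nonneg _).trans (hf₁ 0)
  have hf_lip : ‖f x - f x'‖ ≤ c₃ * ‖x - x'‖ :=
    convex_univ.norm_image_sub_le_of_norm_fderiv_le (fun z _ => hf z) (fun z _ => hf₁ z)
      (Set.mem_univ x') (Set.mem_univ x)
  have hsplit : fderiv ℝ (g ∘ f) x - fderiv ℝ (g ∘ f) x' =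
      (fderiv ℝ g (f x) - fderiv ℝ g (f x')).comp (fderiv ℝ f x) +
        (fderiv ℝ g (f x')).comp (fderiv ℝ f x - fderiv ℝ f x') := by
    rw [fderiv_comp x (hg _) (hf x), fderiv_comp x' (hg _) (hf x'),
      ContinuousLinearMap.sub_comp, ContinuousLinearMap.comp_sub]
    abel
  rw [hsplit]
  calc _ ≤ ‖fderiv ℝ g (f x) - fderiv ℝ g (f x')‖ * ‖fderiv ℝ f x‖ +
        ‖fderiv ℝ g (f x')‖ * ‖fderiv ℝ f x - fderiv ℝ f x'‖ :=
        (norm_add_le _ _).trans (add_le_add (ContinuousLinearMap.opNorm_comp_le _ _)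
          (ContinuousLinearMap.opNorm_comp_le _ _))
    _ ≤ (c₂ * (c₃ * ‖x - x'‖)) * c₃ + c₁ * (c₄ * ‖x - x'‖) := by
        gcongr
        · exact (hg₂ _ _).trans (mul_le_mul_of_nonneg_left hf_lip hc₂)
        · exact hf₁ x
        · exact hg₁ _
        · exact hf₂ x x'
    _ = (c₂ * c₃ ^ 2 + c₁ * c₄) * ‖x - x'‖ := by ring

theorem norm_fderiv_sum_mul_const_sub_le {ι : Type*} (s : Finset ι) {g : ι → E → ℝ}
    (b : ι → ℝ) {C : ℝ} (hg : ∀ i, Differentiable ℝ (g i))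
    (hC : ∀ i x y, ‖fderiv ℝ (g i) x - fderiv ℝ (g i) y‖ ≤ C * ‖x - y‖) (x y : E) :
    ‖fderiv ℝ (fun z => ∑ i ∈ s, g i z * b i) x - fderiv ℝ (fun z => ∑ i ∈ s, g i z * b i) y‖ ≤
      C * (∑ i ∈ s, |b i|) * ‖x - y‖ := by
  have hD : ∀ z, fderiv ℝ (fun z => ∑ i ∈ s, g i z * b i) z =
      ∑ i ∈ s, b i • fderiv ℝ (g i) z := fun z => by
    rw [fderiv_fun_sum fun i _ => (hg i z).mul_const (b i)]
    exact Finset.sum_congr rfl fun i _ => fderiv_mul_const (hg i z) (b i)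
  rw [hD, hD, ← Finset.sum_sub_distrib]
  calc _ ≤ ∑ i ∈ s, ‖b i • fderiv ℝ (g i) x - b i • fderiv ℝ (g i) y‖ := norm_sum_le _ _
    _ ≤ ∑ i ∈ s, |b i| * (C * ‖x - y‖) := Finset.sum_le_sum fun i _ => by
        rw [← smul_sub, norm_smul, Real.norm_eq_abs]
        exact mul_le_mul_of_nonneg_left (hC i x y) (abs_nonneg _)
    _ = C * (∑ i ∈ s, |b i|) * ‖x - y‖ := by rw [← Finset.sum_mul]; ring

end Calculus

section Probability

variable {Ω : Type*} [MeasurableSpace Ω] {P : Measure Ω}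

theorem measurable_sum_range {E : Type*} [AddCommMonoid E] [MeasurableSpace E]
    [MeasurableAdd₂ E] {N : Ω → ℕ} {G : ℕ → Ω → E} (hN : Measurable N)
    (hG : ∀ j, Measurable (G j)) : Measurable fun ω => ∑ j ∈ Finset.range (N ω), G j ω :=
  (measurable_from_prod_countable_left (f := fun q : Ω × ℕ => ∑ j ∈ Finset.range q.2, G j q.1)
    fun n => (Finset.measurable_sum (Finset.range n) fun j _ => hG j :)).comp
      (measurable_id.prodMk hN)

theorem aemeasurable_fderiv_apply {E G : Type*} [NormedAddCommGroup E] [NormedSpace ℝ E]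
    [NormedAddCommGroup G] [NormedSpace ℝ G] [MeasurableSpace G] [BorelSpace G]
    [SecondCountableTopology G] {F : Ω → E → G} (hF : ∀ s, Measurable fun ω => F ω s) {s₀ : E}
    (hd : ∀ᵐ ω ∂P, DifferentiableAt ℝ (F ω) s₀) (u : E) :
    AEMeasurable (fun ω => fderiv ℝ (F ω) s₀ u) P := by
  refine aemeasurable_of_tendsto_metrizable_ae' (f := fun (n : ℕ) ω =>
      (n : ℝ) • (F ω (s₀ + (n : ℝ)⁻¹ • u) - F ω s₀))
    (fun n => (((hF _).sub (hF _)).const_smul _).aemeasurable) ?_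
  filter_upwards [hd] with ω hω
  refine hω.hasFDerivAt.lim u ?_
  simpa only [Real.norm_natCast] using tendsto_natCast_atTop_atTop

theorem lintegral_comp_eq_lintegral_lintegral_of_indepFun {α γ : Type*} [MeasurableSpace α]
    [MeasurableSpace γ] [IsFiniteMeasure P] {X : Ω → α} {Y : Ω → γ} (hX : Measurable X)
    (hY : Measurable Y) (hXY : IndepFun X Y P) {F : α → γ → ℝ≥0∞}
    (hF : Measurable (Function.uncurry F)) :
    ∫⁻ ω, F (X ω) (Y ω) ∂P = ∫⁻ x, ∫⁻ ω, F x (Y ω) ∂P ∂(P.map X) := by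
  calc ∫⁻ ω, F (X ω) (Y ω) ∂P
      = ∫⁻ z, Function.uncurry F z ∂(P.map fun ω => (X ω, Y ω)) :=
        (lintegral_map hF (hX.prodMk hY)).symm
    _ = ∫⁻ x, ∫⁻ y, F x y ∂(P.map Y) ∂(P.map X) := by
        rw [hXY.map_prod_eq_prod_map_map hX.aemeasurable hY.aemeasurable,
          lintegral_prod _ hF.aemeasurable]
        rfl
    _ = ∫⁻ x, ∫⁻ ω, F x (Y ω) ∂P ∂(P.map X) :=
        lintegral_congr fun x => lintegral_map (hF.comp measurable_prodMk_left) hY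

theorem lintegral_ofReal_rpow_sum_range_abs_le {X : ℕ → Ω → ℝ} {r : ℝ} (hr : 1 ≤ r)
    (hX : ∀ j, Measurable (X j)) (hident : ∀ j, IdentDistrib (X j) (X 0) P P) (n : ℕ) :
    ∫⁻ ω, ENNReal.ofReal ((∑ j ∈ Finset.range n, |X j ω|) ^ r) ∂P ≤
      ENNReal.ofReal ((n : ℝ) ^ r) * ∫⁻ ω, ENNReal.ofReal (|X 0 ω| ^ r) ∂P := by
  have hmeas : ∀ j, Measurable fun ω => ENNReal.ofReal (|X j ω| ^ r) := fun j =>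
    ENNReal.measurable_ofReal.comp ((hX j).abs.pow_const r)
  have hmoment : ∀ j, ∫⁻ ω, ENNReal.ofReal (|X j ω| ^ r) ∂P =
      ∫⁻ ω, ENNReal.ofReal (|X 0 ω| ^ r) ∂P := fun j =>
    ((hident j).comp (u := fun x : ℝ => ENNReal.ofReal (|x| ^ r))
      (ENNReal.measurable_ofReal.comp (measurable_id.abs.pow_const r))).lintegral_eq
  have hn : ((n : ℝ) ^ (r - 1)) * n = (n : ℝ) ^ r := by
    rw [← Real.rpow_add_one' n.cast_nonneg (by linarith), sub_add_cancel]
  calc ∫⁻ ω, ENNReal.ofReal ((∑ j ∈ Finset.range n, |X j ω|) ^ r) ∂P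
      ≤ ∫⁻ ω, ENNReal.ofReal ((n : ℝ) ^ (r - 1)) *
          ∑ j ∈ Finset.range n, ENNReal.ofReal (|X j ω| ^ r) ∂P := lintegral_mono fun ω => by
        rw [← ENNReal.ofReal_sum_of_nonneg fun j _ => by positivity,
          ← ENNReal.ofReal_mul (by positivity)]
        refine ENNReal.ofReal_le_ofReal ?_
        simpa using Real.rpow_sum_le_const_mul_sum_rpow (Finset.range n) (fun j => X j ω) hr
    _ = ENNReal.ofReal ((n : ℝ) ^ (r - 1)) * (n * ∫⁻ ω, ENNReal.ofReal (|X 0 ω| ^ r) ∂P) := by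
        rw [lintegral_const_mul _ (Finset.measurable_sum _ fun j _ => hmeas j),
          lintegral_finsetSum _ fun j _ => hmeas j]
        simp [hmoment]
    _ = ENNReal.ofReal ((n : ℝ) ^ r) * ∫⁻ ω, ENNReal.ofReal (|X 0 ω| ^ r) ∂P := by
        rw [← mul_assoc, ← ENNReal.ofReal_natCast, ← ENNReal.ofReal_mul (by positivity), hn]

theorem integrable_rpow_sum_range_abs [IsProbabilityMeasure P] {N : Ω → ℕ} {X : ℕ → Ω → ℝ}
    {r : ℝ} (hr : 1 ≤ r) (hN : Measurable N) (hX : ∀ j, Measurable (X j))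
    (hNX : IndepFun N (fun ω j => X j ω) P) (hident : ∀ j, IdentDistrib (X j) (X 0) P P)
    (hNr : Integrable (fun ω => (N ω : ℝ) ^ r) P) (hXr : Integrable (fun ω => |X 0 ω| ^ r) P) :
    Integrable (fun ω => (∑ j ∈ Finset.range (N ω), |X j ω|) ^ r) P := by
  have hS : Measurable fun ω => ∑ j ∈ Finset.range (N ω), |X j ω| :=
    measurable_sum_range hN fun j => (hX j).abs
  refine (lintegral_ofReal_ne_top_iff_integrable (hS.pow_const r).aestronglyMeasurable
    (ae_of_all _ fun ω => by positivity)).1 (ne_of_lt ?_)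
  have hF : Measurable (Function.uncurry fun (n : ℕ) (x : ℕ → ℝ) =>
      ENNReal.ofReal ((∑ j ∈ Finset.range n, |x j|) ^ r)) :=
    measurable_from_prod_countable_right fun n => (ENNReal.measurable_ofReal.comp
      ((Finset.measurable_sum (Finset.range n) fun j _ => (measurable_pi_apply j).abs).pow_const
        r) :)
  calc ∫⁻ ω, ENNReal.ofReal ((∑ j ∈ Finset.range (N ω), |X j ω|) ^ r) ∂P
      = ∫⁻ n, ∫⁻ ω, ENNReal.ofReal ((∑ j ∈ Finset.range n, |X j ω|) ^ r) ∂P ∂(P.map N) :=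
        lintegral_comp_eq_lintegral_lintegral_of_indepFun hN (measurable_pi_lambda _ hX) hNX hF
    _ ≤ ∫⁻ n, ENNReal.ofReal ((n : ℝ) ^ r) * ∫⁻ ω, ENNReal.ofReal (|X 0 ω| ^ r) ∂P ∂(P.map N) :=
        lintegral_mono fun n => lintegral_ofReal_rpow_sum_range_abs_le hr hX hident n
    _ = (∫⁻ ω, ENNReal.ofReal ((N ω : ℝ) ^ r) ∂P) * ∫⁻ ω, ENNReal.ofReal (|X 0 ω| ^ r) ∂P := by
        rw [lintegral_mul_const _ (by fun_prop), lintegral_map (by fun_prop) hN]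
    _ < ∞ := ENNReal.mul_lt_top hNr.lintegral_lt_top hXr.lintegral_lt_top

theorem integrable_rpow_poissonMeasure (lam : ℝ≥0) (r : ℝ) :
    Integrable (fun n : ℕ => (n : ℝ) ^ r) (poissonMeasure lam) := by
  -- `n ^ r ≤ C * exp n` reduces the moment series to the exponential series at `lam * exp 1`.
  obtain ⟨C, hC⟩ : BddAbove (Set.range fun n : ℕ => (n : ℝ) ^ r * Real.exp (-1 * n)) :=
    ((tendsto_rpow_mul_exp_neg_mul_atTop_nhds_zero r 1 one_pos).comp
      tendsto_natCast_atTop_atTop).bddAbove_range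
  rw [integrable_poissonMeasure_iff]
  refine .of_nonneg_of_le (fun n => by positivity) (fun n => ?_)
    ((Real.summable_pow_div_factorial (lam * Real.exp 1)).mul_left (Real.exp (-lam) * C))
  have hn : (n : ℝ) ^ r ≤ C * Real.exp n := by
    have : (n : ℝ) ^ r * Real.exp (-1 * n) ≤ C := hC ⟨n, rfl⟩
    rwa [neg_one_mul, Real.exp_neg, ← div_eq_mul_inv, div_le_iff₀ (Real.exp_pos _)] at this
  rw [Real.norm_of_nonneg (by positivity)]
  calc Real.exp (-lam) * lam ^ n / n.factorial * (n : ℝ) ^ r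
      ≤ Real.exp (-lam) * lam ^ n / n.factorial * (C * Real.exp n) := by gcongr
    _ = Real.exp (-lam) * C * ((lam * Real.exp 1) ^ n / n.factorial) := by
        rw [mul_pow, ← Real.exp_nat_mul, mul_one]; ring

theorem integrable_rpow_of_map_eq_poissonMeasure {N : Ω → ℕ} {lam : ℝ≥0} (hN : Measurable N)
    (hNpois : P.map N = poissonMeasure lam) (r : ℝ) :
    Integrable (fun ω => (N ω : ℝ) ^ r) P :=
  (integrable_map_measure (g := fun n : ℕ => (n : ℝ) ^ r) .of_discrete hN.aemeasurable).1
    (hNpois ▸ integrable_rpow_poissonMeasure lam r)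

theorem integral_rpow_abs_le_of_abs_le_mul {f g : Ω → ℝ} {c r : ℝ} (hr : 0 ≤ r) (hc : 0 ≤ c)
    (hf : AEStronglyMeasurable f P) (hg₀ : ∀ ω, 0 ≤ g ω) (hg : Integrable (fun ω => g ω ^ r) P)
    (hfg : ∀ᵐ ω ∂P, |f ω| ≤ c * g ω) :
    ∫ ω, |f ω| ^ r ∂P ≤ c ^ r * ∫ ω, g ω ^ r ∂P := by
  have hle : ∀ᵐ ω ∂P, |f ω| ^ r ≤ c ^ r * g ω ^ r := hfg.mono fun ω h =>
    (Real.rpow_le_rpow (abs_nonneg _) h hr).trans_eq (Real.mul_rpow hc (hg₀ ω))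
  have hfr : Integrable (fun ω => |f ω| ^ r) P :=
    (hg.const_mul _).mono' ((Real.continuous_rpow_const hr).comp_aestronglyMeasurable hf.norm)
      (hle.mono fun ω h => by rwa [Real.norm_of_nonneg (by positivity)])
  rw [← integral_const_mul]
  exact integral_mono_ae hfr (hg.const_mul _) hle

end Probability

theorem tendsto_div_rpow_norm_nhdsNE_zero {E : Type*} [NormedAddCommGroup E] {f : E → ℝ}
    {C r : ℝ} (hr : 0 < r) (hf₀ : ∀ u, 0 ≤ f u) (hf : ∀ u, f u ≤ C * (‖u‖ ^ 2) ^ r) :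
    Tendsto (fun u => f u / ‖u‖ ^ r) (𝓝[≠] 0) (𝓝 0) := by
  have hlim : Tendsto (fun u : E => C * ‖u‖ ^ r) (𝓝 0) (𝓝 0) := by
    simpa [hr.ne'] using ((continuous_norm.rpow_const fun _ => Or.inr hr.le).const_mul C).tendsto
      (0 : E)
  refine squeeze_zero' (Eventually.of_forall fun u => by have := hf₀ u; positivity) ?_
    (hlim.mono_left nhdsWithin_le_nhds)
  filter_upwards [self_mem_nhdsWithin] with u hu
  have hu : 0 < ‖u‖ ^ r := Real.rpow_pos_of_pos (norm_pos_iff.2 hu) r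
  rw [div_le_iff₀ hu]
  calc f u ≤ C * (‖u‖ ^ 2) ^ r := hf u
    _ = C * ‖u‖ ^ r * ‖u‖ ^ r := by
        rw [sq, Real.mul_rpow (norm_nonneg u) (norm_nonneg u), mul_assoc]

section LevyField

variable {Ω : Type*} {p : ℕ} {N : Ω → ℕ} {μ : ℕ → Ω → (Fin p → ℝ)} {β : ℕ → Ω → ℝ}
  {M : Ω → (Fin p → ℝ) → (Fin p → ℝ)} {K : (Fin p → ℝ) → ℝ}

theorem levyField_differentiable {ω : Ω} (hK : Differentiable ℝ K)
    (hM : Differentiable ℝ (M ω)) : Differentiable ℝ (levyField N μ β M K ω) :=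
  Differentiable.fun_sum fun j _ => (hK.comp (hM.sub_const (μ j ω))).mul_const _

theorem abs_levyField_sub_sub_fderiv_le {ω : Ω} {c₁ c₂ c₃ c₄ : ℝ}
    (hK : ContDiff ℝ 2 K) (hK₁ : ∀ x, ‖fderiv ℝ K x‖ ≤ c₁)
    (hK₂ : ∀ x, ‖iteratedFDeriv ℝ 2 K x‖ ≤ c₂) (hM : ContDiff ℝ 2 (M ω))
    (hM₁ : ∀ s, ‖fderiv ℝ (M ω) s‖ ≤ c₃) (hM₂ : ∀ s, ‖iteratedFDeriv ℝ 2 (M ω) s‖ ≤ c₄)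
    (s₀ u : Fin p → ℝ) :
    |levyField N μ β M K ω (s₀ + u) - levyField N μ β M K ω s₀ -
        fderiv ℝ (levyField N μ β M K ω) s₀ u| ≤
      (c₂ * c₃ ^ 2 + c₁ * c₄) * ‖u‖ ^ 2 * ∑ j ∈ Finset.range (N ω), |β j ω| := by
  have hKd := hK.differentiable two_ne_zero
  have hMd := hM.differentiable two_ne_zero
  have hD := norm_fderiv_sum_mul_const_sub_le (Finset.range (N ω)) (β · ω)
    (g := fun j s => K (M ω s - μ j ω)) (fun j => hKd.comp (hMd.sub_const _))
    (fun j => norm_fderiv_comp_sub_le ((norm_nonneg _).trans (hK₂ 0)) hKd hK₁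
      (norm_fderiv_sub_fderiv_le_of_norm_iteratedFDeriv_two_le hK hK₂) (hMd.sub_const _)
      (by simpa only [fderiv_sub_const] using hM₁)
      (by simpa only [fderiv_sub_const] using
        norm_fderiv_sub_fderiv_le_of_norm_iteratedFDeriv_two_le hM hM₂))
  have := norm_sub_sub_fderiv_le_of_norm_fderiv_sub_le (levyField_differentiable hKd hMd) hD s₀ u
  rw [Real.norm_eq_abs] at this
  linarith

theorem measurable_levyField_apply [MeasurableSpace Ω] (hN : Measurable N)
    (hμ : ∀ j, Measurable (μ j)) (hβ : ∀ j, Measurable (β j)) (hM : Measurable M)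
    (hK : Measurable K) (s : Fin p → ℝ) : Measurable fun ω => levyField N μ β M K ω s :=
  measurable_sum_range hN fun j =>
    (hK.comp (((measurable_pi_apply s).comp hM).sub (hμ j))).mul (hβ j)

end LevyField

theorem levyDynamic_Lr_differentiable_general
    {Ω : Type*} [MeasurableSpace Ω] (P : Measure Ω) [IsProbabilityMeasure P]
    (p : ℕ) (lam : NNReal)
    (N : Ω → ℕ) (hNmeas : Measurable N) (hNpois : P.map N = poissonMeasure lam)
    (μ : ℕ → Ω → (Fin p → ℝ)) (β : ℕ → Ω → ℝ)
    (hμβmeas : ∀ j, Measurable (fun ω => (μ j ω, β j ω)))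
    (M : Ω → (Fin p → ℝ) → (Fin p → ℝ)) (hMmeas : Measurable M)
    -- N is independent of the pair (((μ_j, β_j))_j, M)
    (hNindep : IndepFun N (fun ω => ((fun j => (μ j ω, β j ω)), M ω)) P)
    (hident : ∀ j, P.map (fun ω => (μ j ω, β j ω)) = P.map (fun ω => (μ 0 ω, β 0 ω)))
    -- r ≥ 1 and E |β₀|^r < ∞
    (r : ℝ) (hr : 1 ≤ r) (hβr : Integrable (fun ω => |β 0 ω| ^ r) P)
    (K : (Fin p → ℝ) → ℝ) (c₁ c₂ c₃ c₄ : ℝ)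
    (hK : ContDiff ℝ 2 K)
    (hK1 : ∀ x, ‖fderiv ℝ K x‖ ≤ c₁)
    (hK2 : ∀ x, ‖iteratedFDeriv ℝ 2 K x‖ ≤ c₂)
    (hM : ∀ᵐ ω ∂P, ContDiff ℝ 2 (M ω) ∧
      (∀ s, ‖fderiv ℝ (M ω) s‖ ≤ c₃) ∧ ∀ s, ‖iteratedFDeriv ℝ 2 (M ω) s‖ ≤ c₄) :
    (∀ᵐ ω ∂P, Differentiable ℝ (levyField N μ β M K ω)) ∧
    ∀ s₀ : Fin p → ℝ,
      Tendsto (fun u : Fin p → ℝ =>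
          (∫ ω, |levyField N μ β M K ω (s₀ + u) - levyField N μ β M K ω s₀ -
            fderiv ℝ (levyField N μ β M K ω) s₀ u| ^ r ∂P) / ‖u‖ ^ r)
        (nhdsWithin 0 {0}ᶜ) (nhds 0) := by
  have hβ : ∀ j, Measurable (β j) := fun j => (hμβmeas j).snd
  have hF := measurable_levyField_apply hNmeas (fun j => (hμβmeas j).fst) hβ hMmeas
    hK.continuous.measurable
  obtain ⟨ω₀, -, -, hc₄⟩ := hM.exists
  have hL : 0 ≤ c₂ * c₃ ^ 2 + c₁ * c₄ := by
    have := (norm_nonneg _).trans (hK1 0)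
    have := (norm_nonneg _).trans (hK2 0)
    have := (norm_nonneg _).trans (hc₄ 0)
    positivity
  have hdiff : ∀ᵐ ω ∂P, Differentiable ℝ (levyField N μ β M K ω) := hM.mono fun ω hω =>
    levyField_differentiable (hK.differentiable two_ne_zero) (hω.1.differentiable two_ne_zero)
  have hS : Integrable (fun ω => (∑ j ∈ Finset.range (N ω), |β j ω|) ^ r) P :=
    integrable_rpow_sum_range_abs hr hNmeas hβ
      (hNindep.comp measurable_id (measurable_pi_lambda _ fun j => measurable_snd.comp
        ((measurable_pi_apply j).comp measurable_fst)))
      (fun j => (IdentDistrib.mk (hμβmeas j).aemeasurable (hμβmeas 0).aemeasurable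
        (hident j)).comp measurable_snd)
      (integrable_rpow_of_map_eq_poissonMeasure hNmeas hNpois r) hβr
  refine ⟨hdiff, fun s₀ => tendsto_div_rpow_norm_nhdsNE_zero
    (C := (c₂ * c₃ ^ 2 + c₁ * c₄) ^ r * ∫ ω, (∑ j ∈ Finset.range (N ω), |β j ω|) ^ r ∂P)
    (by linarith) (fun u => integral_nonneg fun ω => by positivity) fun u => ?_⟩
  calc _ ≤ ((c₂ * c₃ ^ 2 + c₁ * c₄) * ‖u‖ ^ 2) ^ r *
        ∫ ω, (∑ j ∈ Finset.range (N ω), |β j ω|) ^ r ∂P :=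
      integral_rpow_abs_le_of_abs_le_mul (by linarith) (by positivity)
        (((hF _).sub (hF _)).aemeasurable.sub
          (aemeasurable_fderiv_apply hF (hdiff.mono fun ω h => h s₀) u)).aestronglyMeasurable
        (fun ω => by positivity) hS
        (hM.mono fun ω hω => abs_levyField_sub_sub_fderiv_le hK hK1 hK2 hω.1 hω.2.1 hω.2.2 s₀ u)
    _ = _ := by rw [Real.mul_rpow hL (by positivity)]; ring

/-- **L_r-differentiability of the Lévy-dynamic field at a fixed time.**
Suppose `K` is twice continuously differentiable with uniformly bounded first and second
derivatives, and almost surely `s ↦ M (ω, s)` is twice continuously differentiable with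
derivatives bounded by deterministic constants. Then almost surely the path `s ↦ f (ω, s)`
is differentiable, and for every `s₀` the `r`-th mean of the Taylor remainder, divided by
`‖u‖^r`, tends to `0` as `u → 0`. -/
theorem levyDynamic_Lr_differentiable
    {Ω : Type*} [MeasurableSpace Ω] (P : Measure Ω) [IsProbabilityMeasure P]
    (p : ℕ) (hp : 1 ≤ p) (lam : NNReal) (hlam : 0 < lam)
    (N : Ω → ℕ) (hNmeas : Measurable N) (hNpois : P.map N = poissonMeasure lam)
    (μ : ℕ → Ω → (Fin p → ℝ)) (β : ℕ → Ω → ℝ)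
    (hμβmeas : ∀ j, Measurable (fun ω => (μ j ω, β j ω)))
    (M : Ω → (Fin p → ℝ) → (Fin p → ℝ)) (hMmeas : Measurable M)
    -- N is independent of the pair (((μ_j, β_j))_j, M)
    (hNindep : IndepFun N (fun ω => ((fun j => (μ j ω, β j ω)), M ω)) P)
    -- the sequence ((μ_j, β_j))_j is i.i.d. …
    (hiid : iIndepFun (fun j ω => (μ j ω, β j ω)) P)
    (hident : ∀ j, P.map (fun ω => (μ j ω, β j ω)) = P.map (fun ω => (μ 0 ω, β 0 ω)))
    -- … and independent of M
    (hseqM : IndepFun (fun ω => fun j => (μ j ω, β j ω)) M P)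
    -- r ≥ 1 and E |β₀|^r < ∞
    (r : ℝ) (hr : 1 ≤ r) (hβr : Integrable (fun ω => |β 0 ω| ^ r) P)
    (K : (Fin p → ℝ) → ℝ) (c₁ c₂ c₃ c₄ : ℝ)
    (hK : ContDiff ℝ 2 K)
    (hK1 : ∀ x, ‖fderiv ℝ K x‖ ≤ c₁)
    (hK2 : ∀ x, ‖iteratedFDeriv ℝ 2 K x‖ ≤ c₂)
    (hM : ∀ᵐ ω ∂P, ContDiff ℝ 2 (M ω) ∧
      (∀ s, ‖fderiv ℝ (M ω) s‖ ≤ c₃) ∧ ∀ s, ‖iteratedFDeriv ℝ 2 (M ω) s‖ ≤ c₄) :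
    (∀ᵐ ω ∂P, Differentiable ℝ (levyField N μ β M K ω)) ∧
    ∀ s₀ : Fin p → ℝ,
      Tendsto (fun u : Fin p → ℝ =>
          (∫ ω, |levyField N μ β M K ω (s₀ + u) - levyField N μ β M K ω s₀ -
            fderiv ℝ (levyField N μ β M K ω) s₀ u| ^ r ∂P) / ‖u‖ ^ r)
        (nhdsWithin 0 {0}ᶜ) (nhds 0) :=
  levyDynamic_Lr_differentiable_general P p lam N hNmeas hNpois μ β hμβmeas M hMmeas hNindep hident
    r hr hβr K c₁ c₂ c₃ c₄ hK hK1 hK2 hM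
end

section
/- Cov(Σ_{j=0}^{N₁−1} ξ_j, Σ_{j=0}^{N₂−1} η_j) = Cov(ξ₀, η₀) · E[min(N₁, N₂)]. -/
/-
Condition on `(N₁, N₂) = (m, n)`: since the summand pairs are independent of the counts, this
amounts to evaluating at fixed `m, n`. There the mean of `(∑_{j<m} ξ_j)(∑_{k<n} η_k)` is
`m n E ξ₀ E η₀ + min(m, n) Cov(ξ₀, η₀)`, because only the `min(m, n)` diagonal terms `j = k` are
correlated. Averaging over the counts and subtracting `E[S₁] E[S₂] = E N₁ E N₂ E ξ₀ E η₀` (Wald's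
identity), the `m n` part cancels because `N₁` and `N₂` are independent, leaving
`Cov(ξ₀, η₀) E[min(N₁, N₂)]`; the Poisson laws only guarantee that the counts are integrable.
-/

open MeasureTheory ProbabilityTheory Filter

noncomputable def covar {Ω : Type*} [MeasurableSpace Ω] (P : Measure Ω) (X Y : Ω → ℝ) : ℝ :=
  (∫ ω, X ω * Y ω ∂P) - (∫ ω, X ω ∂P) * ∫ ω, Y ω ∂P

section Freezing

variable {Ω α β E : Type*} [MeasurableSpace Ω] {P : Measure Ω} [IsFiniteMeasure P]
  [MeasurableSpace α] [MeasurableSpace β] [NormedAddCommGroup E]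
  {X : Ω → α} {T : Ω → β} {g : α → β → E}

theorem ProbabilityTheory.IndepFun.integrable_comp_of_integral_norm_le (hXT : IndepFun X T P)
    (hX : AEMeasurable X P) (hT : AEMeasurable T P) (hg : StronglyMeasurable (Function.uncurry g))
    (hint : ∀ t, Integrable (fun ω => g (X ω) t) P) {b : β → ℝ}
    (hb : ∀ t, ∫ ω, ‖g (X ω) t‖ ∂P ≤ b t) (hbi : Integrable (fun ω => b (T ω)) P) :
    Integrable (fun ω => g (X ω) (T ω)) P := by
  have hsec (t : β) : StronglyMeasurable (g · t) := hg.comp_measurable measurable_prodMk_right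
  have hnorm : StronglyMeasurable (fun t => ∫ x, ‖g x t‖ ∂(P.map X)) :=
    hg.norm.integral_prod_left (f := fun x t => ‖g x t‖)
  have hprod : Integrable (Function.uncurry g) ((P.map X).prod (P.map T)) := by
    refine (integrable_prod_iff' hg.aestronglyMeasurable).2 ⟨ae_of_all _ fun t => ?_, ?_⟩
    · exact (integrable_map_measure (hsec t).aestronglyMeasurable hX).2 (hint t)
    · refine (integrable_map_measure hnorm.aestronglyMeasurable hT).2
        (hbi.mono' (hnorm.aestronglyMeasurable.comp_aemeasurable hT) (ae_of_all _ fun ω => ?_))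
      rw [Function.comp_apply, Real.norm_of_nonneg (integral_nonneg fun _ => norm_nonneg _),
        integral_map hX (hsec _).norm.aestronglyMeasurable]
      exact hb (T ω)
  rw [← (indepFun_iff_map_prod_eq_prod_map_map hX hT).1 hXT] at hprod
  exact (integrable_map_measure hg.aestronglyMeasurable (hX.prodMk hT)).1 hprod

theorem ProbabilityTheory.IndepFun.integral_comp_eq_integral_integral [NormedSpace ℝ E]
    [CompleteSpace E] (hXT : IndepFun X T P)
    (hX : AEMeasurable X P) (hT : AEMeasurable T P) (hg : StronglyMeasurable (Function.uncurry g))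
    (hgi : Integrable (fun ω => g (X ω) (T ω)) P) :
    ∫ ω, g (X ω) (T ω) ∂P = ∫ ω, ∫ ω', g (X ω') (T ω) ∂P ∂P := by
  have hlaw := (indepFun_iff_map_prod_eq_prod_map_map hX hT).1 hXT
  have hprod : Integrable (Function.uncurry g) ((P.map X).prod (P.map T)) := by
    rw [← hlaw]
    exact (integrable_map_measure hg.aestronglyMeasurable (hX.prodMk hT)).2 hgi
  calc ∫ ω, g (X ω) (T ω) ∂P = ∫ p, Function.uncurry g p ∂((P.map X).prod (P.map T)) := by
        rw [← hlaw, integral_map (hX.prodMk hT) hg.aestronglyMeasurable]; rfl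
    _ = ∫ t, ∫ x, g x t ∂(P.map X) ∂(P.map T) := integral_prod_symm _ hprod
    _ = ∫ ω, ∫ ω', g (X ω') (T ω) ∂P ∂P := by
        rw [integral_map hT (hg.integral_prod_left (f := g)).aestronglyMeasurable]
        congr 1 with ω
        exact integral_map hX (hg.comp_measurable measurable_prodMk_right).aestronglyMeasurable

end Freezing

theorem Finset.sum_range_sum_range_ite_eq {M : Type*} [AddCommMonoid M] (m n : ℕ) (c : M) :
    ∑ j ∈ Finset.range m, ∑ k ∈ Finset.range n, (if j = k then c else 0) = min m n • c := by
  simp_rw [Finset.sum_ite_eq, Finset.sum_ite_mem, Finset.range_inter_range]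
  simp

theorem Nat.cast_min_le_mul {R : Type*} [Semiring R] [LinearOrder R] [IsStrictOrderedRing R]
    (m n : ℕ) : min (m : R) n ≤ m * n := by
  rcases n.eq_zero_or_pos with rfl | hn
  · simp
  · exact (min_le_left _ _).trans (le_mul_of_one_le_right m.cast_nonneg (Nat.one_le_cast.2 hn))

section PartialSums

variable {Ω : Type*} [MeasurableSpace Ω] {P : Measure Ω} {ξ η : ℕ → Ω → ℝ}

theorem integral_sum_range_of_identDistrib (hξ : ∀ j, IdentDistrib (ξ j) (ξ 0) P P)
    (hint : Integrable (ξ 0) P) (m : ℕ) :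
    ∫ ω, ∑ j ∈ Finset.range m, ξ j ω ∂P = m * ∫ ω, ξ 0 ω ∂P := by
  rw [integral_finsetSum _ fun j _ => (hξ j).symm.integrable_snd hint]
  simp [fun j => (hξ j).integral_eq]

theorem integrable_sum_range_mul_sum_range (hξ : ∀ j, MemLp (ξ j) 2 P) (hη : ∀ j, MemLp (η j) 2 P)
    (m n : ℕ) :
    Integrable (fun ω => (∑ j ∈ Finset.range m, ξ j ω) * ∑ k ∈ Finset.range n, η k ω) P :=
  (memLp_finsetSum _ fun j _ => hξ j).integrable_mul (memLp_finsetSum _ fun k _ => hη k)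

theorem integral_mul_of_iIndepFun_of_identDistrib
    (hpair : ∀ j, IdentDistrib (fun ω => (ξ j ω, η j ω)) (fun ω => (ξ 0 ω, η 0 ω)) P P)
    (hiid : iIndepFun (fun j ω => (ξ j ω, η j ω)) P) (j k : ℕ) :
    ∫ ω, ξ j ω * η k ω ∂P
      = (∫ ω, ξ 0 ω ∂P) * (∫ ω, η 0 ω ∂P) + if j = k then covar P (ξ 0) (η 0) else 0 := by
  have hξj : ∫ ω, ξ j ω ∂P = ∫ ω, ξ 0 ω ∂P := ((hpair j).comp measurable_fst).integral_eq
  have hηk : ∫ ω, η k ω ∂P = ∫ ω, η 0 ω ∂P := ((hpair k).comp measurable_snd).integral_eq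
  split_ifs with hjk
  · subst hjk
    have hξη : ∫ ω, ξ j ω * η j ω ∂P = ∫ ω, ξ 0 ω * η 0 ω ∂P :=
      ((hpair j).comp (measurable_fst.mul measurable_snd)).integral_eq
    rw [covar, hξη]
    ring
  · have hind : IndepFun (ξ j) (η k) P :=
      (hiid.indepFun hjk).comp measurable_fst measurable_snd
    rw [hind.integral_fun_mul_eq_mul_integral (hpair j).aemeasurable_fst.fst.aestronglyMeasurable
      (hpair k).aemeasurable_fst.snd.aestronglyMeasurable, hξj, hηk, add_zero]

theorem integral_sum_range_mul_sum_range
    (hpair : ∀ j, IdentDistrib (fun ω => (ξ j ω, η j ω)) (fun ω => (ξ 0 ω, η 0 ω)) P P)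
    (hiid : iIndepFun (fun j ω => (ξ j ω, η j ω)) P)
    (hξ : ∀ j, MemLp (ξ j) 2 P) (hη : ∀ j, MemLp (η j) 2 P) (m n : ℕ) :
    ∫ ω, (∑ j ∈ Finset.range m, ξ j ω) * ∑ k ∈ Finset.range n, η k ω ∂P
      = m * n * ((∫ ω, ξ 0 ω ∂P) * ∫ ω, η 0 ω ∂P) + min (m : ℝ) n * covar P (ξ 0) (η 0) := by
  have hint (j k : ℕ) : Integrable (fun ω => ξ j ω * η k ω) P := (hξ j).integrable_mul (hη k)
  simp_rw [Finset.sum_mul_sum]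
  rw [integral_finsetSum _ fun j _ => integrable_finsetSum _ fun k _ => hint j k]
  simp_rw [integral_finsetSum _ fun k _ => hint _ k,
    integral_mul_of_iIndepFun_of_identDistrib hpair hiid, Finset.sum_add_distrib,
    Finset.sum_range_sum_range_ite_eq]
  simp only [Finset.sum_const, Finset.card_range, nsmul_eq_mul, Nat.cast_min]
  ring

theorem integral_abs_sum_range_mul_sum_range_le
    (hpair : ∀ j, IdentDistrib (fun ω => (ξ j ω, η j ω)) (fun ω => (ξ 0 ω, η 0 ω)) P P)
    (hiid : iIndepFun (fun j ω => (ξ j ω, η j ω)) P)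
    (hξ : ∀ j, MemLp (ξ j) 2 P) (hη : ∀ j, MemLp (η j) 2 P) (m n : ℕ) :
    ∫ ω, |(∑ j ∈ Finset.range m, ξ j ω) * ∑ k ∈ Finset.range n, η k ω| ∂P
      ≤ m * n * ((∫ ω, |ξ 0 ω| ∂P) * (∫ ω, |η 0 ω| ∂P)
        + |covar P (fun ω => |ξ 0 ω|) (fun ω => |η 0 ω|)|) := by
  -- the pairs `(|ξ j|, |η j|)` are again i.i.d., so the product formula applies to them
  have habs := integral_sum_range_mul_sum_range (ξ := fun j ω => |ξ j ω|)
    (η := fun j ω => |η j ω|)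
    (fun j => (hpair j).comp (measurable_fst.abs.prodMk measurable_snd.abs))
    (hiid.comp _ fun _ => measurable_fst.abs.prodMk measurable_snd.abs)
    (fun j => (hξ j).abs) (fun j => (hη j).abs) m n
  set cov := covar P (fun ω => |ξ 0 ω|) (fun ω => |η 0 ω|)
  have hmin : min (m : ℝ) n * cov ≤ m * n * |cov| :=
    calc min (m : ℝ) n * cov ≤ min (m : ℝ) n * |cov| :=
          mul_le_mul_of_nonneg_left (le_abs_self cov) (le_min m.cast_nonneg n.cast_nonneg)
      _ ≤ m * n * |cov| := mul_le_mul_of_nonneg_right (Nat.cast_min_le_mul m n) (abs_nonneg cov)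
  calc ∫ ω, |(∑ j ∈ Finset.range m, ξ j ω) * ∑ k ∈ Finset.range n, η k ω| ∂P
      ≤ ∫ ω, (∑ j ∈ Finset.range m, |ξ j ω|) * ∑ k ∈ Finset.range n, |η k ω| ∂P := by
        refine integral_mono (integrable_sum_range_mul_sum_range hξ hη m n).abs
          (integrable_sum_range_mul_sum_range (fun j => (hξ j).abs) (fun j => (hη j).abs) m n)
          fun ω => ?_
        rw [abs_mul]
        exact mul_le_mul (Finset.abs_sum_le_sum_abs _ _) (Finset.abs_sum_le_sum_abs _ _)
          (abs_nonneg _) (Finset.sum_nonneg fun j _ => abs_nonneg _)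
    _ ≤ _ := by rw [habs]; linarith

end PartialSums

section RandomSums

variable {Ω : Type*} [MeasurableSpace Ω] {P : Measure Ω} [IsFiniteMeasure P]
  {ξ η : ℕ → Ω → ℝ} {N N₁ N₂ : Ω → ℕ}

noncomputable def randomSum (ξ : ℕ → Ω → ℝ) (N : Ω → ℕ) (ω : Ω) : ℝ :=
  ∑ j ∈ Finset.range (N ω), ξ j ω

theorem stronglyMeasurable_uncurry_sum_range :
    StronglyMeasurable (Function.uncurry fun (x : ℕ → ℝ) (m : ℕ) => ∑ j ∈ Finset.range m, x j) :=
  (measurable_from_prod_countable_left fun m =>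
    Finset.measurable_sum (Finset.range m) fun j _ => measurable_pi_apply j).stronglyMeasurable

theorem integrable_randomSum (hξ : ∀ j, IdentDistrib (ξ j) (ξ 0) P P)
    (hint : Integrable (ξ 0) P) (hN : Measurable N) (hNint : Integrable (fun ω => (N ω : ℝ)) P)
    (hindep : IndepFun (fun ω j => ξ j ω) N P) :
    Integrable (randomSum ξ N) P := by
  refine hindep.integrable_comp_of_integral_norm_le (b := fun m => m * ∫ ω, |ξ 0 ω| ∂P)
    (aemeasurable_pi_lambda _ fun j => (hξ j).aemeasurable_fst) hN.aemeasurable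
    stronglyMeasurable_uncurry_sum_range
    (fun m => integrable_finsetSum _ fun j _ => (hξ j).symm.integrable_snd hint)
    (fun m => ?_) (hNint.mul_const (∫ ω, |ξ 0 ω| ∂P))
  calc ∫ ω, ‖∑ j ∈ Finset.range m, ξ j ω‖ ∂P ≤ ∫ ω, ∑ j ∈ Finset.range m, |ξ j ω| ∂P :=
        integral_mono (integrable_finsetSum _ fun j _ => (hξ j).symm.integrable_snd hint).norm
          (integrable_finsetSum _ fun j _ => ((hξ j).symm.integrable_snd hint).abs)
          fun ω => Finset.abs_sum_le_sum_abs _ _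
    _ = m * ∫ ω, |ξ 0 ω| ∂P :=
        integral_sum_range_of_identDistrib (fun j => (hξ j).comp measurable_abs) hint.abs m

theorem integral_randomSum (hξ : ∀ j, IdentDistrib (ξ j) (ξ 0) P P)
    (hint : Integrable (ξ 0) P) (hN : Measurable N) (hNint : Integrable (fun ω => (N ω : ℝ)) P)
    (hindep : IndepFun (fun ω j => ξ j ω) N P) :
    ∫ ω, randomSum ξ N ω ∂P = (∫ ω, (N ω : ℝ) ∂P) * ∫ ω, ξ 0 ω ∂P := by
  calc ∫ ω, randomSum ξ N ω ∂P = ∫ ω, ∫ ω', ∑ j ∈ Finset.range (N ω), ξ j ω' ∂P ∂P :=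
        hindep.integral_comp_eq_integral_integral
          (aemeasurable_pi_lambda _ fun j => (hξ j).aemeasurable_fst) hN.aemeasurable
          stronglyMeasurable_uncurry_sum_range (integrable_randomSum hξ hint hN hNint hindep)
    _ = ∫ ω, (N ω : ℝ) * ∫ ω, ξ 0 ω ∂P ∂P := by
        simp_rw [integral_sum_range_of_identDistrib hξ hint]
    _ = _ := integral_mul_const _ _

theorem stronglyMeasurable_uncurry_sum_range_mul_sum_range :
    StronglyMeasurable (Function.uncurry fun (x : ℕ → ℝ × ℝ) (t : ℕ × ℕ) =>
      (∑ j ∈ Finset.range t.1, (x j).1) * ∑ k ∈ Finset.range t.2, (x k).2) :=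
  (measurable_from_prod_countable_left fun t =>
    (Finset.measurable_sum (Finset.range t.1) fun j _ => (measurable_pi_apply j).fst).mul
      (Finset.measurable_sum (Finset.range t.2) fun k _ =>
        (measurable_pi_apply k).snd)).stronglyMeasurable

theorem integrable_randomSum_mul_randomSum
    (hpair : ∀ j, IdentDistrib (fun ω => (ξ j ω, η j ω)) (fun ω => (ξ 0 ω, η 0 ω)) P P)
    (hiid : iIndepFun (fun j ω => (ξ j ω, η j ω)) P)
    (hξ : ∀ j, MemLp (ξ j) 2 P) (hη : ∀ j, MemLp (η j) 2 P)
    (hN₁ : Measurable N₁) (hN₂ : Measurable N₂)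
    (hNint : Integrable (fun ω => (N₁ ω : ℝ) * N₂ ω) P)
    (hindep : IndepFun (fun ω j => (ξ j ω, η j ω)) (fun ω => (N₁ ω, N₂ ω)) P) :
    Integrable (fun ω => randomSum ξ N₁ ω * randomSum η N₂ ω) P :=
  hindep.integrable_comp_of_integral_norm_le
    (b := fun t => t.1 * t.2 * ((∫ ω, |ξ 0 ω| ∂P) * (∫ ω, |η 0 ω| ∂P)
      + |covar P (fun ω => |ξ 0 ω|) (fun ω => |η 0 ω|)|))
    (aemeasurable_pi_lambda _ fun j => (hpair j).aemeasurable_fst) (hN₁.prodMk hN₂).aemeasurable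
    stronglyMeasurable_uncurry_sum_range_mul_sum_range
    (fun t => integrable_sum_range_mul_sum_range hξ hη t.1 t.2)
    (fun t => integral_abs_sum_range_mul_sum_range_le hpair hiid hξ hη t.1 t.2)
    (hNint.mul_const _)

theorem integral_randomSum_mul_randomSum
    (hpair : ∀ j, IdentDistrib (fun ω => (ξ j ω, η j ω)) (fun ω => (ξ 0 ω, η 0 ω)) P P)
    (hiid : iIndepFun (fun j ω => (ξ j ω, η j ω)) P)
    (hξ : ∀ j, MemLp (ξ j) 2 P) (hη : ∀ j, MemLp (η j) 2 P)
    (hN₁ : Measurable N₁) (hN₂ : Measurable N₂)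
    (hNint : Integrable (fun ω => (N₁ ω : ℝ) * N₂ ω) P)
    (hindep : IndepFun (fun ω j => (ξ j ω, η j ω)) (fun ω => (N₁ ω, N₂ ω)) P) :
    ∫ ω, randomSum ξ N₁ ω * randomSum η N₂ ω ∂P
      = (∫ ω, (N₁ ω : ℝ) * N₂ ω ∂P) * ((∫ ω, ξ 0 ω ∂P) * ∫ ω, η 0 ω ∂P)
        + (∫ ω, min (N₁ ω : ℝ) (N₂ ω) ∂P) * covar P (ξ 0) (η 0) := by
  have hmin : Integrable (fun ω => min (N₁ ω : ℝ) (N₂ ω)) P :=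
    hNint.mono' (by fun_prop) (ae_of_all _ fun ω => by
      rw [Real.norm_of_nonneg (le_min (N₁ ω).cast_nonneg (N₂ ω).cast_nonneg)]
      exact Nat.cast_min_le_mul _ _)
  calc ∫ ω, randomSum ξ N₁ ω * randomSum η N₂ ω ∂P
      = ∫ ω, ∫ ω', (∑ j ∈ Finset.range (N₁ ω), ξ j ω') * ∑ k ∈ Finset.range (N₂ ω), η k ω' ∂P
          ∂P :=
        hindep.integral_comp_eq_integral_integral
          (aemeasurable_pi_lambda _ fun j => (hpair j).aemeasurable_fst)
          (hN₁.prodMk hN₂).aemeasurable stronglyMeasurable_uncurry_sum_range_mul_sum_range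
          (integrable_randomSum_mul_randomSum hpair hiid hξ hη hN₁ hN₂ hNint hindep)
    _ = ∫ ω, (N₁ ω : ℝ) * N₂ ω * ((∫ ω, ξ 0 ω ∂P) * ∫ ω, η 0 ω ∂P)
          + min (N₁ ω : ℝ) (N₂ ω) * covar P (ξ 0) (η 0) ∂P := by
        simp_rw [integral_sum_range_mul_sum_range hpair hiid hξ hη]
    _ = _ := by
        rw [integral_add (hNint.mul_const _) (hmin.mul_const _), integral_mul_const,
          integral_mul_const]

end RandomSums

theorem integrable_natCast_of_map_eq_poissonMeasure {Ω : Type*} [MeasurableSpace Ω]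
    {P : Measure Ω} {N : Ω → ℕ} {r : NNReal} (hN : Measurable N)
    (hlaw : P.map N = poissonMeasure r) : Integrable (fun ω => (N ω : ℝ)) P := by
  -- the index shift `n ↦ n + 1` turns `n * r ^ n / n!` into `r * r ^ n / n!`
  have hsum : Summable fun n : ℕ => Real.exp (-r) * r ^ n / n.factorial * ‖(n : ℝ)‖ := by
    refine (summable_nat_add_iff 1).1 (((Real.summable_pow_div_factorial r).mul_left
      (Real.exp (-r) * r)).congr fun n => ?_)
    rw [Nat.factorial_succ, Real.norm_natCast]
    push_cast
    field_simp
    ring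
  have hpois := integrable_poissonMeasure_iff.2 hsum
  rw [← hlaw] at hpois
  exact (integrable_map_measure .of_discrete hN.aemeasurable).1 hpois

theorem compoundPoisson_cov_eq_cov_mul_expMin_general
    {Ω : Type*} [MeasurableSpace Ω] (P : Measure Ω) [IsProbabilityMeasure P]
    (lam : NNReal)
    (N₁ N₂ : Ω → ℕ) (hN₁meas : Measurable N₁) (hN₂meas : Measurable N₂)
    (hN₁pois : P.map N₁ = poissonMeasure lam) (hN₂pois : P.map N₂ = poissonMeasure lam)
    (hNindep : IndepFun N₁ N₂ P)
    (ξ η : ℕ → Ω → ℝ)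
    (hmeas : ∀ j, Measurable (fun ω => (ξ j ω, η j ω)))
    (hξsq : ∀ j, MemLp (ξ j) 2 P) (hηsq : ∀ j, MemLp (η j) 2 P)
    (hiid : iIndepFun (fun j ω => (ξ j ω, η j ω)) P)
    (hident : ∀ j, P.map (fun ω => (ξ j ω, η j ω)) = P.map (fun ω => (ξ 0 ω, η 0 ω)))
    (hindep : IndepFun (fun ω => fun j => (ξ j ω, η j ω)) (fun ω => (N₁ ω, N₂ ω)) P) :
    covar P (fun ω => ∑ j ∈ Finset.range (N₁ ω), ξ j ω)
            (fun ω => ∑ j ∈ Finset.range (N₂ ω), η j ω)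
      = covar P (ξ 0) (η 0) * ∫ ω, (min (N₁ ω) (N₂ ω) : ℝ) ∂P := by
  have hpair (j : ℕ) : IdentDistrib (fun ω => (ξ j ω, η j ω)) (fun ω => (ξ 0 ω, η 0 ω)) P P :=
    ⟨(hmeas j).aemeasurable, (hmeas 0).aemeasurable, hident j⟩
  have hN₁int := integrable_natCast_of_map_eq_poissonMeasure hN₁meas hN₁pois
  have hN₂int := integrable_natCast_of_map_eq_poissonMeasure hN₂meas hN₂pois
  have hNcast : IndepFun (fun ω => (N₁ ω : ℝ)) (fun ω => (N₂ ω : ℝ)) P :=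
    hNindep.comp measurable_from_nat measurable_from_nat
  have hξ (j : ℕ) : IdentDistrib (ξ j) (ξ 0) P P := (hpair j).comp measurable_fst
  have hη (j : ℕ) : IdentDistrib (η j) (η 0) P P := (hpair j).comp measurable_snd
  have hξN₁ : IndepFun (fun ω j => ξ j ω) N₁ P :=
    hindep.comp (measurable_pi_lambda _ fun j => (measurable_pi_apply j).fst) measurable_fst
  have hηN₂ : IndepFun (fun ω j => η j ω) N₂ P :=
    hindep.comp (measurable_pi_lambda _ fun j => (measurable_pi_apply j).snd) measurable_snd
  change covar P (randomSum ξ N₁) (randomSum η N₂) = _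
  rw [covar, integral_randomSum_mul_randomSum hpair hiid hξsq hηsq hN₁meas hN₂meas
      (hNcast.integrable_mul hN₁int hN₂int) hindep,
    integral_randomSum hξ ((hξsq 0).integrable one_le_two) hN₁meas hN₁int hξN₁,
    integral_randomSum hη ((hηsq 0).integrable one_le_two) hN₂meas hN₂int hηN₂,
    hNcast.integral_fun_mul_eq_mul_integral hN₁int.1 hN₂int.1]
  ring

/-- **Covariance of two compound Poisson sums with shared summand pairs.**
If `N₁, N₂` are independent Poisson (λ) counts, `((ξ_j, η_j))_j` is an i.i.d. sequence of
pairs of square-integrable random variables independent of `(N₁, N₂)`, then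
`Cov (∑_{j < N₁} ξ_j, ∑_{j < N₂} η_j) = Cov (ξ₀, η₀) * E [min (N₁, N₂)]`. -/
theorem compoundPoisson_cov_eq_cov_mul_expMin
    {Ω : Type*} [MeasurableSpace Ω] (P : Measure Ω) [IsProbabilityMeasure P]
    (lam : NNReal) (hlam : 0 < lam)
    (N₁ N₂ : Ω → ℕ) (hN₁meas : Measurable N₁) (hN₂meas : Measurable N₂)
    (hN₁pois : P.map N₁ = poissonMeasure lam) (hN₂pois : P.map N₂ = poissonMeasure lam)
    (hNindep : IndepFun N₁ N₂ P)
    (ξ η : ℕ → Ω → ℝ)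
    (hmeas : ∀ j, Measurable (fun ω => (ξ j ω, η j ω)))
    (hξsq : ∀ j, MemLp (ξ j) 2 P) (hηsq : ∀ j, MemLp (η j) 2 P)
    (hiid : iIndepFun (fun j ω => (ξ j ω, η j ω)) P)
    (hident : ∀ j, P.map (fun ω => (ξ j ω, η j ω)) = P.map (fun ω => (ξ 0 ω, η 0 ω)))
    (hindep : IndepFun (fun ω => fun j => (ξ j ω, η j ω)) (fun ω => (N₁ ω, N₂ ω)) P) :
    covar P (fun ω => ∑ j ∈ Finset.range (N₁ ω), ξ j ω)
            (fun ω => ∑ j ∈ Finset.range (N₂ ω), η j ω)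
      = covar P (ξ 0) (η 0) * ∫ ω, (min (N₁ ω) (N₂ ω) : ℝ) ∂P :=
  compoundPoisson_cov_eq_cov_mul_expMin_general P lam N₁ N₂ hN₁meas hN₂meas hN₁pois hN₂pois hNindep
    ξ η hmeas hξsq hηsq hiid hident hindep
end
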